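/- arXiv:2411.19380 — 2 statements merged into one kernel-verified Lean document; each statement's English description precedes it below -/
import Mathlib

section
/- Let k be an algebraically closed field of characteristic ≠ 2 and let q be the quadratic form (x,y,z) ↦ x² + y² on k³. Then the even Clifford algebra Cl₀(q) is isomorphic, as a k-algebra, to the k-subalgebra of the 2×2 matrix algebra M₂(k[ε]) consisting of all matrices [[a, bε], [cε, d]] with a, b, c, d ∈ k (i.e. matrices whose diagonal entries lie in k·1 and whose off-diagonal entries lie in k·ε). -/
/-!
Pick `i` with `i² = -1`. The matrices `[[0, 1], [1, 0]]`, `[[0, i], [-i, 0]]` and `diag(ε, -ε)`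
over `k[ε]` square to `1, 1, 0` and pairwise anticommute, so they are the images of `v₁, v₂, v₃`
under a representation of `Cl(q)`. By the relations, `Cl₀(q)` is spanned by
`1, v₁v₂, v₁v₃, v₂v₃`, and `a + b v₁v₂ + c v₁v₃ + d v₂v₃` goes to
`[[a - bi, (-c - di)ε], [(c - di)ε, a + bi]]`; since `2` is invertible, this coefficient map is a
bijection onto the matrices `[[a, bε], [cε, d]]`.
-/

open CliffordAlgebra DualNumber

namespace EvenCliffordSumTwoSquares

variable {R : Type*} [CommRing R]

variable (R) in
abbrev q : QuadraticForm R ((R × R) × R) :=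
  QuadraticMap.prod (QuadraticMap.prod (QuadraticMap.sq : QuadraticForm R R)
    (QuadraticMap.sq : QuadraticForm R R)) (0 : QuadraticForm R R)

section CliffordRelations

variable (R) in
def v₁ : CliffordAlgebra (q R) := ι (q R) ((1, 0), 0)

variable (R) in
def v₂ : CliffordAlgebra (q R) := ι (q R) ((0, 1), 0)

variable (R) in
def v₃ : CliffordAlgebra (q R) := ι (q R) ((0, 0), 1)

theorem v₁_mul_v₁ : v₁ R * v₁ R = 1 := by simp [v₁, ι_sq_scalar]

theorem v₂_mul_v₂ : v₂ R * v₂ R = 1 := by simp [v₂, ι_sq_scalar]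

theorem v₃_mul_v₃ : v₃ R * v₃ R = 0 := by simp [v₃, ι_sq_scalar]

theorem v₂_mul_v₁ : v₂ R * v₁ R = -(v₁ R * v₂ R) :=
  ι_mul_ι_comm_of_isOrtho <| by simp [QuadraticMap.IsOrtho]

theorem v₃_mul_v₁ : v₃ R * v₁ R = -(v₁ R * v₃ R) :=
  ι_mul_ι_comm_of_isOrtho <| by simp [QuadraticMap.IsOrtho]

theorem v₃_mul_v₂ : v₃ R * v₂ R = -(v₂ R * v₃ R) :=
  ι_mul_ι_comm_of_isOrtho <| by simp [QuadraticMap.IsOrtho]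

theorem v₁_mul_v₁_mul (x : CliffordAlgebra (q R)) : v₁ R * (v₁ R * x) = x := by
  rw [← mul_assoc, v₁_mul_v₁, one_mul]

theorem v₂_mul_v₂_mul (x : CliffordAlgebra (q R)) : v₂ R * (v₂ R * x) = x := by
  rw [← mul_assoc, v₂_mul_v₂, one_mul]

theorem v₂_mul_v₁_mul (x : CliffordAlgebra (q R)) :
    v₂ R * (v₁ R * x) = -(v₁ R * (v₂ R * x)) := by
  rw [← mul_assoc, v₂_mul_v₁, neg_mul, mul_assoc]

theorem v₃_mul_v₁_mul (x : CliffordAlgebra (q R)) :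
    v₃ R * (v₁ R * x) = -(v₁ R * (v₃ R * x)) := by
  rw [← mul_assoc, v₃_mul_v₁, neg_mul, mul_assoc]

theorem v₃_mul_v₂_mul (x : CliffordAlgebra (q R)) :
    v₃ R * (v₂ R * x) = -(v₂ R * (v₃ R * x)) := by
  rw [← mul_assoc, v₃_mul_v₂, neg_mul, mul_assoc]

theorem ι_eq (m : (R × R) × R) : ι (q R) m = m.1.1 • v₁ R + m.1.2 • v₂ R + m.2 • v₃ R := by
  obtain ⟨⟨x, y⟩, z⟩ := m
  simp only [v₁, v₂, v₃, ← map_smul, ← map_add]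
  congr 1
  simp

end CliffordRelations

section EvenPart

variable (R) in
def evenMk (a b c d : R) : CliffordAlgebra (q R) :=
  a • 1 + b • (v₁ R * v₂ R) + c • (v₁ R * v₃ R) + d • (v₂ R * v₃ R)

theorem evenMk_mem_even (a b c d : R) : evenMk R a b c d ∈ even (q R) := by
  have hv := ι_mul_ι_mem_evenOdd_zero (q R)
  refine add_mem (add_mem (add_mem ?_ ?_) ?_) ?_ <;> refine Subalgebra.smul_mem _ ?_ _
  · exact one_mem _
  all_goals exact hv _ _

theorem algebraMap_eq_evenMk (r : R) :
    algebraMap R (CliffordAlgebra (q R)) r = evenMk R r 0 0 0 := by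
  simp [evenMk, Algebra.algebraMap_eq_smul_one]

theorem evenMk_add_evenMk (a b c d a' b' c' d' : R) :
    evenMk R a b c d + evenMk R a' b' c' d' = evenMk R (a + a') (b + b') (c + c') (d + d') := by
  simp only [evenMk]
  module

theorem evenMk_mul_evenMk (a b c d a' b' c' d' : R) :
    evenMk R a b c d * evenMk R a' b' c' d' =
      evenMk R (a * a' - b * b') (a * b' + b * a') (a * c' + c * a' + b * d' - d * b')
        (a * d' + d * a' - b * c' + c * b') := by
  simp only [evenMk, add_mul, mul_add, smul_mul_smul, mul_one, one_mul, mul_assoc, mul_neg,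
    neg_neg, mul_zero, v₁_mul_v₁_mul, v₂_mul_v₂_mul, v₂_mul_v₁_mul, v₃_mul_v₁_mul,
    v₃_mul_v₂_mul, v₁_mul_v₁, v₂_mul_v₂, v₃_mul_v₃, v₃_mul_v₂]
  module

theorem ι_mul_ι (m m' : (R × R) × R) :
    ι (q R) m * ι (q R) m' =
      evenMk R (m.1.1 * m'.1.1 + m.1.2 * m'.1.2) (m.1.1 * m'.1.2 - m.1.2 * m'.1.1)
        (m.1.1 * m'.2 - m.2 * m'.1.1) (m.1.2 * m'.2 - m.2 * m'.1.2) := by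
  simp only [ι_eq, evenMk, add_mul, mul_add, smul_mul_smul, v₁_mul_v₁, v₂_mul_v₂, v₃_mul_v₃,
    v₂_mul_v₁, v₃_mul_v₁, v₃_mul_v₂]
  module

theorem exists_evenMk_of_mem_even {x : CliffordAlgebra (q R)} (hx : x ∈ even (q R)) :
    ∃ a b c d : R, evenMk R a b c d = x := by
  refine even_induction (q R) (motive := fun x _ => ∃ a b c d : R, evenMk R a b c d = x)
    (fun r => ⟨r, 0, 0, 0, (algebraMap_eq_evenMk r).symm⟩) ?_ ?_ x hx
  · rintro _ _ _ _ ⟨a, b, c, d, rfl⟩ ⟨a', b', c', d', rfl⟩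
    exact ⟨_, _, _, _, (evenMk_add_evenMk ..).symm⟩
  · rintro m₁ m₂ _ _ ⟨a, b, c, d, rfl⟩
    exact ⟨_, _, _, _, by rw [ι_mul_ι, evenMk_mul_evenMk]⟩

end EvenPart

section DualNumberMatrices

variable (R) in
def dualMat (a b c d : R) : Matrix (Fin 2) (Fin 2) (DualNumber R) :=
  !![algebraMap R _ a, b • ε; c • ε, algebraMap R _ d]

theorem algebraMap_eq_dualMat (r : R) :
    algebraMap R (Matrix (Fin 2) (Fin 2) (DualNumber R)) r = dualMat R r 0 0 r := by
  rw [Matrix.algebraMap_eq_diagonal, Matrix.diagonal_fin_two]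
  simp [dualMat]

theorem dualMat_add_dualMat (a b c d a' b' c' d' : R) :
    dualMat R a b c d + dualMat R a' b' c' d' =
      dualMat R (a + a') (b + b') (c + c') (d + d') := by
  simp [dualMat, Matrix.of_add_of, add_smul]

theorem dualMat_mul_dualMat (a b c d a' b' c' d' : R) :
    dualMat R a b c d * dualMat R a' b' c' d' =
      dualMat R (a * a') (a * b' + b * d') (c * a' + d * c') (d * d') := by
  ext i j <;> fin_cases i <;> fin_cases j <;>
    simp [dualMat, TrivSqZeroExt.algebraMap_eq_inl] <;> ring

theorem dualMat_eq_zero_iff {a b c d : R} :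
    dualMat R a b c d = 0 ↔ a = 0 ∧ b = 0 ∧ c = 0 ∧ d = 0 := by
  simp [dualMat, ← Matrix.ext_iff, Fin.forall_fin_two, TrivSqZeroExt.ext_iff,
    TrivSqZeroExt.algebraMap_eq_inl, and_assoc]

variable (R) in
def dualMatSubalgebra : Subalgebra R (Matrix (Fin 2) (Fin 2) (DualNumber R)) where
  carrier := {M | ∃ a b c d : R, dualMat R a b c d = M}
  mul_mem' := by
    rintro _ _ ⟨a, b, c, d, rfl⟩ ⟨a', b', c', d', rfl⟩
    exact ⟨_, _, _, _, (dualMat_mul_dualMat ..).symm⟩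
  add_mem' := by
    rintro _ _ ⟨a, b, c, d, rfl⟩ ⟨a', b', c', d', rfl⟩
    exact ⟨_, _, _, _, (dualMat_add_dualMat ..).symm⟩
  algebraMap_mem' r := ⟨r, 0, 0, r, (algebraMap_eq_dualMat r).symm⟩

theorem coe_dualMatSubalgebra :
    (dualMatSubalgebra R : Set (Matrix (Fin 2) (Fin 2) (DualNumber R))) =
      {M | ∃ a b c d : R, M 0 0 = algebraMap R (DualNumber R) a ∧ M 0 1 = b • ε ∧
        M 1 0 = c • ε ∧ M 1 1 = algebraMap R (DualNumber R) d} := by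
  ext M
  refine ⟨?_, ?_⟩
  · rintro ⟨a, b, c, d, rfl⟩
    exact ⟨a, b, c, d, rfl, rfl, rfl, rfl⟩
  · rintro ⟨a, b, c, d, h₀₀, h₀₁, h₁₀, h₁₁⟩
    exact ⟨a, b, c, d, by rw [M.eta_fin_two, h₀₀, h₀₁, h₁₀, h₁₁, dualMat]⟩

end DualNumberMatrices

section Representation

def vecToMatrix (i : R) : (R × R) × R →ₗ[R] Matrix (Fin 2) (Fin 2) (DualNumber R) where
  toFun m := !![m.2 • ε, algebraMap R _ (m.1.1 + m.1.2 * i);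
    algebraMap R _ (m.1.1 - m.1.2 * i), -(m.2 • ε)]
  map_add' m m' := by
    ext r s <;> fin_cases r <;> fin_cases s <;> simp [TrivSqZeroExt.algebraMap_eq_inl] <;> ring
  map_smul' c m := by
    ext r s <;> fin_cases r <;> fin_cases s <;> simp [TrivSqZeroExt.algebraMap_eq_inl] <;> ring

theorem vecToMatrix_mul_self {i : R} (hi : i * i = -1) (m : (R × R) × R) :
    vecToMatrix i m * vecToMatrix i m = algebraMap R _ (q R m) := by
  rw [algebraMap_eq_dualMat]
  ext r s <;> fin_cases r <;> fin_cases s <;>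
    simp [vecToMatrix, dualMat, TrivSqZeroExt.algebraMap_eq_inl] <;>
    linear_combination (-(m.1.2 * m.1.2)) * hi

def toMatrix {i : R} (hi : i * i = -1) :
    CliffordAlgebra (q R) →ₐ[R] Matrix (Fin 2) (Fin 2) (DualNumber R) :=
  CliffordAlgebra.lift (q R) ⟨vecToMatrix i, vecToMatrix_mul_self hi⟩

theorem toMatrix_evenMk {i : R} (hi : i * i = -1) (a b c d : R) :
    toMatrix hi (evenMk R a b c d) =
      dualMat R (a - b * i) (-c - d * i) (c - d * i) (a + b * i) := by
  simp only [evenMk, v₁, v₂, v₃, toMatrix, map_add, map_smul, map_mul, map_one, lift_ι_apply]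
  ext r s <;> fin_cases r <;> fin_cases s <;>
    simp [vecToMatrix, dualMat, TrivSqZeroExt.algebraMap_eq_inl] <;> ring

theorem toMatrix_mem_of_mem_even {i : R} (hi : i * i = -1) {x : CliffordAlgebra (q R)}
    (hx : x ∈ even (q R)) : toMatrix hi x ∈ dualMatSubalgebra R := by
  obtain ⟨a, b, c, d, rfl⟩ := exists_evenMk_of_mem_even hx
  exact ⟨_, _, _, _, (toMatrix_evenMk hi a b c d).symm⟩

def evenToMatrix {i : R} (hi : i * i = -1) : even (q R) →ₐ[R] dualMatSubalgebra R :=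
  ((toMatrix hi).comp (even (q R)).val).codRestrict _ fun x => toMatrix_mem_of_mem_even hi x.2

end Representation

section Bijectivity

variable {k : Type*} [Field k] {i : k}

theorem evenToMatrix_injective (hi : i * i = -1) (h2 : (2 : k) ≠ 0) :
    Function.Injective (evenToMatrix hi) := by
  rw [injective_iff_map_eq_zero]
  rintro ⟨x, hx⟩ h
  obtain ⟨a, b, c, d, rfl⟩ := exists_evenMk_of_mem_even hx
  have hmat : dualMat k (a - b * i) (-c - d * i) (c - d * i) (a + b * i) = 0 := by
    rw [← toMatrix_evenMk hi]
    exact congrArg Subtype.val h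
  obtain ⟨h₀₀, h₀₁, h₁₀, h₁₁⟩ := dualMat_eq_zero_iff.mp hmat
  have ha : a = 0 := mul_left_cancel₀ h2 (by linear_combination h₀₀ + h₁₁)
  have hb : b = 0 := mul_left_cancel₀ h2 (by linear_combination i * (h₀₀ - h₁₁) + 2 * b * hi)
  have hc : c = 0 := mul_left_cancel₀ h2 (by linear_combination h₁₀ - h₀₁)
  have hd : d = 0 := mul_left_cancel₀ h2 (by linear_combination i * (h₀₁ + h₁₀) + 2 * d * hi)
  subst ha hb hc hd
  ext
  simp [evenMk]

theorem evenToMatrix_surjective (hi : i * i = -1) (h2 : (2 : k) ≠ 0) :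
    Function.Surjective (evenToMatrix hi) := by
  rintro ⟨_, α, β, γ, δ, rfl⟩
  refine ⟨⟨_, evenMk_mem_even ((α + δ) / 2) ((α - δ) * i / 2) ((γ - β) / 2) ((β + γ) * i / 2)⟩,
    Subtype.ext ?_⟩
  change toMatrix hi (evenMk k _ _ _ _) = _
  rw [toMatrix_evenMk]
  congr 1 <;> field_simp
  · linear_combination (δ - α) * hi
  · linear_combination -(β + γ) * hi
  · linear_combination -(β + γ) * hi
  · linear_combination (α - δ) * hi

end Bijectivity

end EvenCliffordSumTwoSquares

open EvenCliffordSumTwoSquares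

/-- Let `k` be an algebraically closed field of characteristic `≠ 2` and let
`q` be the quadratic form `(x, y, z) ↦ x² + y²` on `k³` (modelled on `(k × k) × k`).  Then the
even Clifford algebra `Cl₀(q)` is isomorphic, as a `k`-algebra, to the `k`-subalgebra of
`M₂(k[ε])` consisting of the matrices `[[a, bε], [cε, d]]` with `a, b, c, d ∈ k`. -/
theorem stmt5 (k : Type) [Field k] [IsAlgClosed k] (hchar : ringChar k ≠ 2) :
    ∃ A : Subalgebra k (Matrix (Fin 2) (Fin 2) (DualNumber k)),
      (A : Set (Matrix (Fin 2) (Fin 2) (DualNumber k))) =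
        {M | ∃ a b c d : k,
          M 0 0 = algebraMap k (DualNumber k) a ∧
          M 0 1 = b • DualNumber.eps ∧
          M 1 0 = c • DualNumber.eps ∧
          M 1 1 = algebraMap k (DualNumber k) d} ∧
      Nonempty (↥(CliffordAlgebra.even
          (QuadraticMap.prod
            (QuadraticMap.prod (QuadraticMap.sq : QuadraticForm k k)
              (QuadraticMap.sq : QuadraticForm k k))
            (0 : QuadraticForm k k))) ≃ₐ[k] ↥A) := by
  obtain ⟨i, hi⟩ := IsAlgClosed.exists_pow_nat_eq (-1 : k) two_pos
  rw [pow_two] at hi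
  have h2 : (2 : k) ≠ 0 := Ring.two_ne_zero hchar
  exact ⟨dualMatSubalgebra k, coe_dualMatSubalgebra,
    ⟨AlgEquiv.ofBijective (evenToMatrix hi)
      ⟨evenToMatrix_injective hi h2, evenToMatrix_surjective hi h2⟩⟩⟩
end

section
/- Let k be an algebraically closed field of characteristic ≠ 2, let N ≥ 1, let Q ∈ k[x₁,…,x_N] be homogeneous of degree 2 and G ∈ k[x₁,…,x_N] homogeneous of degree 3, and set F = x₀·Q + G ∈ k[x₀, x₁, …, x_N]. Assume: (a) for every z ∈ k^{N+1} with F(z) = 0 and ∂F/∂xᵢ(z) = 0 for all i = 0,…,N, the point z is a scalar multiple of e₀ = (1,0,…,0) (i.e. the projective hypersurface F = 0 is smooth away from [e₀]); and (b) for every y ∈ k^N \ {0} with ∂Q/∂xᵢ(y) = 0 for all i = 1,…,N, one has G(y) ≠ 0 (i.e. the cubic G = 0 avoids the singular points of the quadric Q = 0). Then for every z ∈ k^N \ {0} with Q(z) = 0 and G(z) = 0, the gradient vectors (∂Q/∂x₁(z),…,∂Q/∂x_N(z)) and (∂G/∂x₁(z),…,∂G/∂x_N(z)) are linearly independent over k;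 in particular the complete intersection Q = G = 0 in projective space is smooth. -/
/-!
If `s ∇Q(z) + t ∇G(z) = 0` with `Q(z) = G(z) = 0`, then either `t = 0`, so `z` is a singular
point of the quadric lying on the cubic, which (b) forbids, or `(s/t, z)` is a singular point of
`F = x₀ Q + G`, since `F(a, z) = a Q(z) + G(z)`, `∂₀F = Q` and `∂ᵢ₊₁F = x₀ ∂ᵢQ + ∂ᵢG`; by (a)
it is then a multiple of `e₀`, forcing `z = 0`.
-/

open MvPolynomial

namespace MvPolynomial

lemma pderiv_rename_of_notMem_range {R σ τ : Type*} [CommSemiring R] {f : σ → τ} {i : τ}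
    (hi : i ∉ Set.range f) (p : MvPolynomial σ R) : pderiv i (rename f p) = 0 := by
  classical
  refine pderiv_eq_zero_of_notMem_vars fun h => hi ?_
  obtain ⟨j, -, rfl⟩ := Finset.mem_image.mp (vars_rename f p h)
  exact ⟨j, rfl⟩

section ConeOverFin

variable {R : Type*} [CommSemiring R] {N : ℕ} (Q G : MvPolynomial (Fin N) R)

lemma eval_cons_rename_succ (a : R) (z : Fin N → R) (p : MvPolynomial (Fin N) R) :
    eval (Fin.cons a z : Fin (N + 1) → R) (rename Fin.succ p) = eval z p := by
  rw [eval_rename]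
  rfl

lemma eval_cons_X_zero_mul_rename_succ_add (a : R) (z : Fin N → R) :
    eval (Fin.cons a z : Fin (N + 1) → R) (X 0 * rename Fin.succ Q + rename Fin.succ G) =
      a * eval z Q + eval z G := by
  simp only [map_add, map_mul, eval_X, eval_cons_rename_succ, Fin.cons_zero]

lemma pderiv_zero_X_zero_mul_rename_succ_add :
    pderiv 0 (X 0 * rename Fin.succ Q + rename Fin.succ G) = rename Fin.succ Q := by
  have h0 : (0 : Fin (N + 1)) ∉ Set.range Fin.succ := fun ⟨i, hi⟩ => Fin.succ_ne_zero i hi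
  simp [pderiv_rename_of_notMem_range h0]

lemma pderiv_succ_X_zero_mul_rename_succ_add (i : Fin N) :
    pderiv i.succ (X 0 * rename Fin.succ Q + rename Fin.succ G) =
      X 0 * rename Fin.succ (pderiv i Q) + rename Fin.succ (pderiv i G) := by
  simp [pderiv_rename (Fin.succ_injective N), pderiv_X_of_ne (Fin.succ_ne_zero i).symm]

end ConeOverFin

lemma eval_pderiv_X_zero_mul_rename_succ_add_eq_zero {k : Type*} [Field k] {N : ℕ}
    {Q G : MvPolynomial (Fin N) k} {a : k} {z : Fin N → k} (hQz : eval z Q = 0)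
    (hgrad : ∀ i, a * eval z (pderiv i Q) + eval z (pderiv i G) = 0) (j : Fin (N + 1)) :
    eval (Fin.cons a z : Fin (N + 1) → k)
      (pderiv j (X 0 * rename Fin.succ Q + rename Fin.succ G)) = 0 := by
  induction j using Fin.cases with
  | zero => rwa [pderiv_zero_X_zero_mul_rename_succ_add, eval_cons_rename_succ]
  | succ i =>
    rw [pderiv_succ_X_zero_mul_rename_succ_add, eval_cons_X_zero_mul_rename_succ_add]
    exact hgrad i

end MvPolynomial

theorem stmt19_general (k : Type) [Field k]
    (N : ℕ)
    (Q G : MvPolynomial (Fin N) k)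
    (F : MvPolynomial (Fin (N + 1)) k)
    (hF : F = MvPolynomial.X 0 * MvPolynomial.rename Fin.succ Q +
      MvPolynomial.rename Fin.succ G)
    (ha : ∀ z : Fin (N + 1) → k,
      MvPolynomial.eval z F = 0 →
      (∀ i : Fin (N + 1), MvPolynomial.eval z (MvPolynomial.pderiv i F) = 0) →
      ∃ c : k, z = c • (fun j => if j = 0 then (1 : k) else 0))
    (hb : ∀ y : Fin N → k, y ≠ 0 →
      (∀ i : Fin N, MvPolynomial.eval y (MvPolynomial.pderiv i Q) = 0) →
      MvPolynomial.eval y G ≠ 0) :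
    ∀ z : Fin N → k, z ≠ 0 →
      MvPolynomial.eval z Q = 0 → MvPolynomial.eval z G = 0 →
      LinearIndependent k
        ![fun i : Fin N => MvPolynomial.eval z (MvPolynomial.pderiv i Q),
          fun i : Fin N => MvPolynomial.eval z (MvPolynomial.pderiv i G)] := by
  intro z hz hQz hGz
  rw [LinearIndependent.pair_iff]
  intro s t hst
  have hrel : ∀ i, s * eval z (pderiv i Q) + t * eval z (pderiv i G) = 0 := fun i => by
    simpa using congrFun hst i
  obtain rfl | ht := eq_or_ne t 0
  · refine ⟨?_, rfl⟩
    by_contra hs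
    exact hb z hz (fun i => by simpa [hs] using hrel i) hGz
  · have hgrad : ∀ i, s / t * eval z (pderiv i Q) + eval z (pderiv i G) = 0 := fun i => by
      field_simp
      linear_combination hrel i
    subst hF
    obtain ⟨c, hc⟩ := ha (Fin.cons (s / t) z)
      (by rw [eval_cons_X_zero_mul_rename_succ_add, hQz, hGz, mul_zero, add_zero])
      (eval_pderiv_X_zero_mul_rename_succ_add_eq_zero hQz hgrad)
    exact absurd (funext fun i => by simpa [Fin.succ_ne_zero] using congrFun hc i.succ) hz

/-- Let `k` be an algebraically closed field of characteristic `≠ 2`, let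
`N ≥ 1`, let `Q ∈ k[x₁, …, x_N]` be homogeneous of degree `2`, `G ∈ k[x₁, …, x_N]` homogeneous
of degree `3`, and set `F = x₀·Q + G ∈ k[x₀, …, x_N]`.  Assume (a) the projective cubic
hypersurface `F = 0` is smooth away from `[e₀]`, i.e. every point where `F` and all its partial
derivatives vanish is a scalar multiple of `e₀ = (1, 0, …, 0)`; and (b) the cubic `G = 0`
avoids the singular points of the quadric `Q = 0`.  Then at every nonzero `z` with
`Q(z) = G(z) = 0`, the gradients of `Q` and of `G` are linearly independent over `k`; in
particular the complete intersection `Q = G = 0` is smooth. -/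
theorem stmt19 (k : Type) [Field k] [IsAlgClosed k] (hchar : ringChar k ≠ 2)
    (N : ℕ) (hN : 1 ≤ N)
    (Q G : MvPolynomial (Fin N) k)
    (hQ : Q.IsHomogeneous 2) (hG : G.IsHomogeneous 3)
    (F : MvPolynomial (Fin (N + 1)) k)
    (hF : F = MvPolynomial.X 0 * MvPolynomial.rename Fin.succ Q +
      MvPolynomial.rename Fin.succ G)
    (ha : ∀ z : Fin (N + 1) → k,
      MvPolynomial.eval z F = 0 →
      (∀ i : Fin (N + 1), MvPolynomial.eval z (MvPolynomial.pderiv i F) = 0) →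
      ∃ c : k, z = c • (fun j => if j = 0 then (1 : k) else 0))
    (hb : ∀ y : Fin N → k, y ≠ 0 →
      (∀ i : Fin N, MvPolynomial.eval y (MvPolynomial.pderiv i Q) = 0) →
      MvPolynomial.eval y G ≠ 0) :
    ∀ z : Fin N → k, z ≠ 0 →
      MvPolynomial.eval z Q = 0 → MvPolynomial.eval z G = 0 →
      LinearIndependent k
        ![fun i : Fin N => MvPolynomial.eval z (MvPolynomial.pderiv i Q),
          fun i : Fin N => MvPolynomial.eval z (MvPolynomial.pderiv i G)] :=
  stmt19_general k N Q G F hF ha hb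
end
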